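/- Let m ≥ 0 and n ≥ 1 be integers, let l_1, …, l_m be integers with l_j ≥ 2, let ν_1, …, ν_n be real numbers with ν_r ≥ 0, and set a_k = [∏_{j=1}^m (l_j)_k] / [(k!)^{m+n} · ∏_{r=1}^n (ν_r + 1)_k]. Then lim_{k→∞} (−log a_k) / (k log k) = 2n; consequently the order of the entire function f(z) = Σ_{k=0}^∞ a_k z^k, given by ρ(f) = limsup_{k→∞} (k log k) / (−log a_k), equals 1/(2n). -/

import Mathlib

/-!
Every Pochhammer symbol `(b)_k` with `b ≥ 1` lies between `k!` and `b^k k!`, so by Stirling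
`log (b)_k = k log k + O(k)`, i.e. `log (b)_k ~ k log k`. Hence `-log a_k` is asymptotic to
`(m + n + n - m) k log k = 2n k log k`, and the reciprocal ratio converges to `1/(2n)`, which is
then also its limsup.
-/

/-- The rising factorial (Pochhammer symbol) `(a)_k = a(a+1)⋯(a+k-1)`. -/
noncomputable def risingFac (a : ℝ) (k : ℕ) : ℝ :=
  ∏ j ∈ Finset.range k, (a + j)

open Filter Real Topology

lemma tendsto_div_mul_log_of_abs_sub_le {f : ℕ → ℝ} (C : ℝ)
    (hf : ∀ᶠ k in atTop, |f k - k * log k| ≤ C * k) :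
    Tendsto (fun k : ℕ => f k / (k * log k)) atTop (𝓝 1) := by
  have hlog : Tendsto (fun k : ℕ => log k) atTop atTop :=
    tendsto_log_atTop.comp tendsto_natCast_atTop_atTop
  rw [tendsto_iff_norm_sub_tendsto_zero]
  refine squeeze_zero' (Eventually.of_forall fun _ => norm_nonneg _) ?_
    (by simpa using hlog.inv_tendsto_atTop.const_mul C)
  filter_upwards [hf, eventually_ge_atTop 2] with k hfk hk
  have hk0 : (0 : ℝ) < k := by positivity
  have hlogk : 0 < log k := log_pos (by exact_mod_cast hk)
  have hpos : 0 < k * log k := mul_pos hk0 hlogk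
  rw [Real.norm_eq_abs, div_sub_one hpos.ne', abs_div, abs_of_pos hpos, div_le_iff₀ hpos]
  calc |f k - k * log k| ≤ C * k := hfk
    _ = C * (log k)⁻¹ * (k * log k) := by field_simp

lemma risingFac_pos {a : ℝ} (ha : 0 < a) (k : ℕ) : 0 < risingFac a k :=
  Finset.prod_pos fun _ _ => by positivity

lemma risingFac_one (k : ℕ) : risingFac 1 k = k.factorial := by
  rw [risingFac, ← Finset.prod_range_add_one_eq_factorial]
  push_cast
  exact Finset.prod_congr rfl fun _ _ => add_comm _ _

lemma risingFac_mono {a b : ℝ} (ha : 0 ≤ a) (hab : a ≤ b) (k : ℕ) :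
    risingFac a k ≤ risingFac b k :=
  Finset.prod_le_prod (fun _ _ => by positivity) fun _ _ => by linarith

lemma risingFac_le_pow_mul_factorial {a : ℝ} (ha : 1 ≤ a) (k : ℕ) :
    risingFac a k ≤ a ^ k * k.factorial := by
  have hpow : a ^ k = ∏ _j ∈ Finset.range k, a := by simp
  rw [← risingFac_one, risingFac, risingFac, hpow, ← Finset.prod_mul_distrib]
  refine Finset.prod_le_prod (fun _ _ => by positivity) fun j _ => ?_
  have : (0 : ℝ) ≤ j := j.cast_nonneg
  nlinarith

lemma abs_log_risingFac_sub_le {a : ℝ} (ha : 1 ≤ a) {k : ℕ} (hk : k ≠ 0) :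
    |log (risingFac a k) - k * log k| ≤ max 1 (log a) * k := by
  have hfac : (0 : ℝ) < k.factorial := by exact_mod_cast k.factorial_pos
  have hlogk : 0 ≤ log k := log_nonneg (by exact_mod_cast Nat.one_le_iff_ne_zero.mpr hk)
  have hlower : k * log k - k ≤ log (risingFac a k) := by
    have hstirling := Stirling.le_log_factorial_stirling hk
    have hpi : 0 < log (2 * π) := log_pos (by linarith [pi_gt_three])
    have hmono : log k.factorial ≤ log (risingFac a k) :=
      log_le_log hfac (risingFac_one k ▸ risingFac_mono zero_le_one ha k)
    linarith
  have hupper : log (risingFac a k) ≤ k * log k + k * log a := by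
    have hpow : log k.factorial ≤ k * log k := by
      rw [← log_pow]
      exact log_le_log hfac (by exact_mod_cast k.factorial_le_pow)
    have hle := log_le_log (risingFac_pos (by linarith) k) (risingFac_le_pow_mul_factorial ha k)
    rw [log_mul (by positivity) hfac.ne', log_pow] at hle
    linarith
  have hk0 : (0 : ℝ) ≤ k := k.cast_nonneg
  rw [abs_le]
  constructor <;> nlinarith [le_max_left 1 (log a), le_max_right 1 (log a)]

lemma tendsto_log_risingFac_div {a : ℝ} (ha : 1 ≤ a) :
    Tendsto (fun k : ℕ => log (risingFac a k) / (k * log k)) atTop (𝓝 1) :=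
  tendsto_div_mul_log_of_abs_sub_le _ <| (eventually_ne_atTop 0).mono fun _ hk =>
    abs_log_risingFac_sub_le ha hk

lemma tendsto_log_prod_risingFac_div {ι : Type*} (s : Finset ι) {b : ι → ℝ}
    (hb : ∀ i ∈ s, 1 ≤ b i) :
    Tendsto (fun k : ℕ => log (∏ i ∈ s, risingFac (b i) k) / (k * log k)) atTop
      (𝓝 s.card) := by
  have hsum := tendsto_finsetSum s fun i hi => tendsto_log_risingFac_div (hb i hi)
  simp only [Finset.sum_const, nsmul_eq_mul, mul_one] at hsum
  refine hsum.congr fun k => ?_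
  rw [log_prod fun i hi => (risingFac_pos (by linarith [hb i hi]) k).ne', Finset.sum_div]

/-- For integers `m ≥ 0`, `n ≥ 1`, integers `l_j ≥ 2` and reals `ν_r ≥ 0`, with
`a_k = [∏_j (l_j)_k] / [(k!)^{m+n} ∏_r (ν_r+1)_k]`, one has
`lim_{k→∞} (-log a_k)/(k log k) = 2n`; consequently the order
`ρ(f) = limsup_{k→∞} (k log k)/(-log a_k)` of `f(z) = Σ a_k z^k` equals `1/(2n)`. -/
theorem stmt_19 (m n : ℕ) (hn : 1 ≤ n)
    (l : Fin m → ℕ) (hl : ∀ j, 2 ≤ l j)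
    (ν : Fin n → ℝ) (hν : ∀ r, 0 ≤ ν r)
    (a : ℕ → ℝ)
    (ha : ∀ k : ℕ, a k = (∏ j, risingFac (l j) k) /
      ((k.factorial : ℝ) ^ (m + n) * ∏ r, risingFac (ν r + 1) k)) :
    Filter.Tendsto (fun k : ℕ => (-Real.log (a k)) / ((k : ℝ) * Real.log k))
      Filter.atTop (nhds (2 * (n : ℝ))) ∧
    Filter.limsup (fun k : ℕ => ((k : ℝ) * Real.log k) / (-Real.log (a k)))
      Filter.atTop = 1 / (2 * (n : ℝ)) := by
  have hl1 : ∀ j, (1 : ℝ) ≤ l j := fun j => by exact_mod_cast (hl j).trans' one_le_two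
  have hnum := tendsto_log_prod_risingFac_div Finset.univ fun j (_ : j ∈ Finset.univ) => hl1 j
  have hden := tendsto_log_prod_risingFac_div Finset.univ fun r (_ : r ∈ Finset.univ) =>
    (show 1 ≤ ν r + 1 by linarith [hν r])
  have hfac := tendsto_log_risingFac_div (le_refl 1)
  simp only [Finset.card_univ, Fintype.card_fin, risingFac_one] at hnum hden hfac
  have hT : Tendsto (fun k : ℕ => -log (a k) / (k * log k)) atTop (𝓝 (2 * n)) := by
    convert ((hfac.const_mul ((m : ℝ) + n)).add hden).sub hnum using 1
    · ext k
      have hN : 0 < ∏ j, risingFac (l j) k :=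
        Finset.prod_pos fun j _ => risingFac_pos (by linarith [hl1 j]) k
      have hD : 0 < ∏ r, risingFac (ν r + 1) k :=
        Finset.prod_pos fun r _ => risingFac_pos (by linarith [hν r]) k
      rw [ha k, log_div hN.ne' (by positivity), log_mul (by positivity) hD.ne', log_pow]
      push_cast
      ring
    · ring_nf
  have h2n : (2 * n : ℝ) ≠ 0 := by positivity
  refine ⟨hT, Tendsto.limsup_eq ?_⟩
  simpa only [inv_div, one_div] using hT.inv₀ h2n
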